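/- Let X be the 5-point metric space which is the join of a 2-point space with distance 4/3 and a 3-point space with all distances 2 (cross-distances all 1). Then lim_{t→0+}|tX| = 7/6. In particular X does not have the one-point property. -/
import Mathlib


open Filter Topology

/-- The distance matrix of the five-point join of a two-point space with distance `4/3`
and a three-point space with all distances `2` (cross-distances `1`). -/
noncomputable def fivePtDist : Matrix (Fin 2 ⊕ Fin 3) (Fin 2 ⊕ Fin 3) ℝ :=
  Matrix.of fun a b =>
    match a, b with
    | Sum.inl i, Sum.inl j => if i = j then 0 else 4 / 3
    | Sum.inr i, Sum.inr j => if i = j then 0 else 2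
    | _, _ => 1

/-- `5 + 3u⁴ + 4u⁶ - 12u³ = (1-u)² * fiveR u`. -/
noncomputable def fiveR (u : ℝ) : ℝ := 5 + 10*u + 15*u^2 + 8*u^3 + 4*u^4

/-- The determinant-like denominator is `(1-u)² * fiveQ u`. -/
noncomputable def fiveQ (u : ℝ) : ℝ :=
  1 + 2*u + 3*u^2 + 4*u^3 + 6*u^4 + 8*u^5 + 6*u^6 + 4*u^7 + 2*u^8

noncomputable def fiveD (u : ℝ) : ℝ := (1-u)^2 * fiveQ u

/-- The exponential matrix, with `u = exp (-t/3)`. -/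
noncomputable def fiveM (u : ℝ) : Matrix (Fin 2 ⊕ Fin 3) (Fin 2 ⊕ Fin 3) ℝ :=
  Matrix.of fun a b =>
    match a, b with
    | Sum.inl i, Sum.inl j => if i = j then 1 else u^4
    | Sum.inr i, Sum.inr j => if i = j then 1 else u^6
    | _, _ => u^3

/-- The explicit inverse of `fiveM u`. -/
noncomputable def fiveN (u : ℝ) : Matrix (Fin 2 ⊕ Fin 3) (Fin 2 ⊕ Fin 3) ℝ :=
  Matrix.of fun a b =>
    match a, b with
    | Sum.inl i, Sum.inl j =>
        if i = j then ((1+2*u^6)/fiveD u + 1/(1-u^4))/2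
        else ((1+2*u^6)/fiveD u - 1/(1-u^4))/2
    | Sum.inr i, Sum.inr j =>
        if i = j then ((1+u^4)/fiveD u + 2/(1-u^6))/3
        else ((1+u^4)/fiveD u - 1/(1-u^6))/3
    | _, _ => -u^3 / fiveD u

lemma fiveQ_pos {u : ℝ} (hu : 0 < u) : 0 < fiveQ u := by unfold fiveQ; positivity

lemma fiveD_ne {u : ℝ} (h0 : 0 < u) (h1 : u < 1) : fiveD u ≠ 0 := by
  have h2 : (0:ℝ) < (1-u)^2 := by nlinarith
  have := mul_pos h2 (fiveQ_pos h0)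
  simpa [fiveD] using this.ne'

lemma one_sub_pow_ne {u : ℝ} (h0 : 0 < u) (h1 : u < 1) (n : ℕ) (hn : n ≠ 0) :
    1 - u^n ≠ 0 := by
  have : u^n < 1 := pow_lt_one₀ h0.le h1 hn
  linarith

set_option maxHeartbeats 2000000 in
lemma fiveMN {u : ℝ} (h0 : 0 < u) (h1 : u < 1) : fiveM u * fiveN u = 1 := by
  have hD : fiveD u ≠ 0 := fiveD_ne h0 h1
  have h4 : 1 - u^4 ≠ 0 := one_sub_pow_ne h0 h1 4 (by norm_num)
  have h6 : 1 - u^6 ≠ 0 := one_sub_pow_ne h0 h1 6 (by norm_num)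
  ext a b
  rcases a with a | a <;> rcases b with b | b <;> fin_cases a <;> fin_cases b <;>
  · simp [fiveM, fiveN, Matrix.mul_apply, Fintype.sum_sum_type, Fin.sum_univ_two,
      Fin.sum_univ_three, Matrix.one_apply]
    field_simp
    unfold fiveD fiveQ
    ring

lemma fiveN_sum {u : ℝ} (h0 : 0 < u) (h1 : u < 1) :
    ∑ a, ∑ b, fiveN u a b = fiveR u / fiveQ u := by
  have hD : fiveD u ≠ 0 := fiveD_ne h0 h1
  have h4 : 1 - u^4 ≠ 0 := one_sub_pow_ne h0 h1 4 (by norm_num)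
  have h6 : 1 - u^6 ≠ 0 := one_sub_pow_ne h0 h1 6 (by norm_num)
  have hQ : fiveQ u ≠ 0 := (fiveQ_pos h0).ne'
  simp [fiveN, Fintype.sum_sum_type, Fin.sum_univ_two, Fin.sum_univ_three]
  field_simp
  unfold fiveD fiveQ fiveR
  ring

lemma matrix_eq (t : ℝ) :
    (Matrix.of fun a b => Real.exp (-t * fivePtDist a b)) = fiveM (Real.exp (-t/3)) := by
  have key : ∀ (n : ℕ) (c : ℝ), -t * c = n * (-t/3) →
      Real.exp (-t * c) = Real.exp (-t/3) ^ n := by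
    intro n c h
    rw [h, Real.exp_nat_mul]
  ext a b
  rcases a with a | a <;> rcases b with b | b <;>
    simp only [fivePtDist, fiveM, Matrix.of_apply] <;>
    try split_ifs
  all_goals
    first
    | (apply key; push_cast; ring)
    | simp

/-- A five-point space without the one-point property: `lim_{t→0+}|tX| = 7/6 ≠ 1`. -/
theorem fivePt_limit :
    Tendsto (fun t : ℝ => ∑ a, ∑ b,
        (Matrix.of fun a b => Real.exp (-t * fivePtDist a b))⁻¹ a b)
      (𝓝[>] (0 : ℝ)) (𝓝 (7 / 6)) ∧
    ¬ Tendsto (fun t : ℝ => ∑ a, ∑ b,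
        (Matrix.of fun a b => Real.exp (-t * fivePtDist a b))⁻¹ a b)
      (𝓝[>] (0 : ℝ)) (𝓝 1) := by
  have key : Tendsto (fun t : ℝ => ∑ a, ∑ b,
      (Matrix.of fun a b => Real.exp (-t * fivePtDist a b))⁻¹ a b)
      (𝓝[>] (0 : ℝ)) (𝓝 (7 / 6)) := by
    have heq : (fun t : ℝ => ∑ a, ∑ b,
        (Matrix.of fun a b => Real.exp (-t * fivePtDist a b))⁻¹ a b) =ᶠ[𝓝[>] (0:ℝ)]
        (fun t : ℝ => fiveR (Real.exp (-t/3)) / fiveQ (Real.exp (-t/3))) := by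
      filter_upwards [self_mem_nhdsWithin] with t ht
      have ht' : (0:ℝ) < t := ht
      have h0 : 0 < Real.exp (-t/3) := Real.exp_pos _
      have h1 : Real.exp (-t/3) < 1 := by
        have : Real.exp (-t/3) < Real.exp 0 := Real.exp_lt_exp.mpr (by linarith)
        simpa using this
      rw [matrix_eq t, Matrix.inv_eq_right_inv (fiveMN h0 h1), fiveN_sum h0 h1]
    rw [tendsto_congr' heq]
    have cR : Continuous fun t : ℝ => fiveR (Real.exp (-t/3)) := by
      unfold fiveR; fun_prop
    have cQ : Continuous fun t : ℝ => fiveQ (Real.exp (-t/3)) := by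
      unfold fiveQ; fun_prop
    have hQ0 : fiveQ (Real.exp (-(0:ℝ)/3)) ≠ 0 := by
      norm_num [fiveQ]
    have hcont : ContinuousAt
        (fun t : ℝ => fiveR (Real.exp (-t/3)) / fiveQ (Real.exp (-t/3))) 0 :=
      ContinuousAt.div cR.continuousAt cQ.continuousAt hQ0
    have hval : fiveR (Real.exp (-(0:ℝ)/3)) / fiveQ (Real.exp (-(0:ℝ)/3)) = 7/6 := by
      norm_num [fiveR, fiveQ]
    have htend := hcont.tendsto
    rw [hval] at htend
    exact htend.mono_left nhdsWithin_le_nhds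
  refine ⟨key, fun hcontra => ?_⟩
  have := tendsto_nhds_unique key hcontra
  norm_num at this
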